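/- arXiv:2501.10870 — 2 statements merged into one kernel-verified Lean document; each statement's English description precedes it below -/
import Mathlib

section
/- Let s_j = C₁ exp(-C₂ j²) and N(λ) = Σ_{j=1}^∞ s_j/(s_j + λ). If λ_n = exp(-C' n^{2/(2m+d)}) with 0 < C' ≤ C₂, m > 0, d ≥ 1, then N(λ_n) = O(n^{d/(2m+d)}) as n → ∞. -/
set_option maxHeartbeats 1000000

/-- With eigenvalues `s j = C₁ exp(-C₂ j²)` and `λ_n = exp(-C' n^{2/(2m+d)})`, `0 < C' ≤ C₂`,
the effective dimension satisfies `N(λ_n) = O(n^{d/(2m+d)})`. -/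
theorem effective_dimension_gaussian_rate
    (C₁ C₂ C' : ℝ) (hC₁ : 0 < C₁) (hC₂ : 0 < C₂) (hC' : 0 < C') (hCle : C' ≤ C₂)
    (m : ℝ) (hm : 0 < m) (d : ℕ) (hd : 1 ≤ d)
    (s : ℕ → ℝ) (hs : ∀ j, s j = C₁ * Real.exp (-C₂ * (j : ℝ) ^ 2))
    (lam : ℕ → ℝ)
    (hlam : ∀ n, lam n = Real.exp (-C' * (n : ℝ) ^ ((2 : ℝ) / (2 * m + d)))) :
    ∃ C > 0, ∃ n₀ : ℕ, ∀ n ≥ n₀,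
      ∑' j : ℕ, s (j + 1) / (s (j + 1) + lam n)
        ≤ C * (n : ℝ) ^ ((d : ℝ) / (2 * m + d)) := by
  have hr1 : Real.exp (-C₂) < 1 := by
    rw [Real.exp_lt_one_iff]; linarith
  set r := Real.exp (-C₂) with hrdef
  have hr0 : 0 < r := Real.exp_pos _
  have hr1' : 0 < 1 - r := by linarith
  set B := C₁ * r / (1 - r) with hBdef
  have hB0 : 0 < B := by positivity
  clear_value r B
  have hden : (0:ℝ) < 2 * m + d := by
    have : (1:ℝ) ≤ (d:ℝ) := by exact_mod_cast hd
    linarith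
  refine ⟨2 + B, by linarith, 1, ?_⟩
  intro n hn
  have hn1 : (1:ℝ) ≤ (n:ℝ) := by exact_mod_cast hn
  have hn0 : (0:ℝ) ≤ (n:ℝ) := by linarith
  set L := lam n with hL
  have hLpos : 0 < L := by rw [hL, hlam]; exact Real.exp_pos _
  have hspos : ∀ j : ℕ, 0 < s j := fun j => by rw [hs]; positivity
  set f : ℕ → ℝ := fun j => s (j + 1) / (s (j + 1) + L) with hf
  have hf0 : ∀ j, 0 ≤ f j := fun j => by
    have := hspos (j+1); positivity
  have hf1 : ∀ j, f j ≤ 1 := fun j => by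
    rw [hf]
    have h1 := hspos (j+1)
    rw [div_le_one (by linarith)]; linarith
  have hfle : ∀ j, f j ≤ s (j + 1) / L := fun j => by
    have h1 := hspos (j+1)
    apply div_le_div_of_nonneg_left h1.le hLpos
    linarith
  clear_value f L
  -- summability of f
  have hgeo : Summable (fun j : ℕ => r ^ j) := summable_geometric_of_lt_one hr0.le hr1
  have hsum : Summable f := by
    refine Summable.of_nonneg_of_le hf0 (fun j => ?_) (hgeo.mul_left (C₁ / L))
    refine (hfle j).trans ?_
    have hexp : Real.exp (-C₂ * ((j:ℝ)+1) ^ 2) ≤ r ^ j := by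
      rw [hrdef, ← Real.exp_nat_mul, Real.exp_le_exp]
      have h0 : (0:ℝ) ≤ (j:ℝ) := Nat.cast_nonneg j
      have h1 : (j:ℝ) ≤ ((j:ℝ)+1) ^ 2 := by nlinarith
      nlinarith [mul_le_mul_of_nonneg_left h1 hC₂.le]
    have : s (j + 1) ≤ C₁ * r ^ j := by
      rw [hs]; push_cast
      exact mul_le_mul_of_nonneg_left hexp hC₁.le
    rw [div_le_iff₀ hLpos]
    calc s (j + 1) ≤ C₁ * r ^ j := this
      _ = C₁ / L * r ^ j * L := by field_simp

  -- the cut point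
  set J : ℕ := ⌈(n:ℝ) ^ ((1:ℝ) / (2 * m + d))⌉₊ with hJ
  have hnpow1 : (1:ℝ) ≤ (n:ℝ) ^ ((1:ℝ) / (2 * m + d)) :=
    Real.one_le_rpow hn1 (by positivity)
  have hJ1 : 1 ≤ J := by
    rw [hJ]
    exact Nat.one_le_ceil_iff.mpr (by linarith)
  have hJr1 : (1:ℝ) ≤ (J:ℝ) := by exact_mod_cast hJ1
  have hJsq : (n:ℝ) ^ ((2:ℝ) / (2 * m + d)) ≤ (J:ℝ) ^ 2 := by
    have h1 : (n:ℝ) ^ ((1:ℝ) / (2 * m + d)) ≤ (J:ℝ) := Nat.le_ceil _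
    have h2 : (n:ℝ) ^ ((2:ℝ) / (2 * m + d)) = ((n:ℝ) ^ ((1:ℝ) / (2 * m + d))) ^ 2 := by
      rw [← Real.rpow_natCast ((n:ℝ) ^ ((1:ℝ) / (2 * m + d))) 2, ← Real.rpow_mul hn0]
      congr 1
      push_cast
      ring
    rw [h2]
    have h0 : (0:ℝ) ≤ (n:ℝ) ^ ((1:ℝ) / (2 * m + d)) := by positivity
    nlinarith
  clear_value J
  -- tail bound
  have htail : ∀ j : ℕ, f (j + J) ≤ C₁ * r * r ^ j := by
    intro j
    refine (hfle (j + J)).trans ?_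
    rw [hs, hL, hlam]
    have hjr : (0:ℝ) ≤ (j:ℝ) := Nat.cast_nonneg j
    have key : -C₂ * ((j + J + 1 : ℕ):ℝ) ^ 2 - (-C' * (n:ℝ) ^ ((2:ℝ) / (2 * m + d)))
        ≤ -C₂ * ((j:ℝ) + 1) := by
      push_cast
      have h1 : C' * (n:ℝ) ^ ((2:ℝ) / (2 * m + d)) ≤ C₂ * (J:ℝ) ^ 2 := by
        have hnn : (0:ℝ) ≤ (n:ℝ) ^ ((2:ℝ) / (2 * m + d)) := by positivity
        nlinarith
      have h2 : (J:ℝ) ^ 2 + ((j:ℝ) + 1) ≤ ((j:ℝ) + (J:ℝ) + 1) ^ 2 := by nlinarith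
      have h3 := mul_le_mul_of_nonneg_left h2 hC₂.le
      linarith
    calc C₁ * Real.exp (-C₂ * ((j + J + 1 : ℕ):ℝ) ^ 2) /
            Real.exp (-C' * (n:ℝ) ^ ((2:ℝ) / (2 * m + d)))
        = C₁ * Real.exp (-C₂ * ((j + J + 1 : ℕ):ℝ) ^ 2
            - (-C' * (n:ℝ) ^ ((2:ℝ) / (2 * m + d)))) := by
          rw [Real.exp_sub]; ring
      _ ≤ C₁ * Real.exp (-C₂ * ((j:ℝ) + 1)) :=
          mul_le_mul_of_nonneg_left (Real.exp_le_exp.mpr key) hC₁.le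
      _ = C₁ * r * r ^ j := by
          rw [show -C₂ * ((j:ℝ)+1) = (j:ℝ) * (-C₂) + (-C₂) by ring, Real.exp_add,
            Real.exp_nat_mul, ← hrdef]
          ring
  -- split the sum
  have hsplit := Summable.sum_add_tsum_nat_add (f := f) J hsum
  have hhead : ∑ i ∈ Finset.range J, f i ≤ (J:ℝ) := by
    calc ∑ i ∈ Finset.range J, f i ≤ ∑ i ∈ Finset.range J, (1:ℝ) :=
          Finset.sum_le_sum fun i _ => hf1 i
      _ = (J:ℝ) := by simp
  have htailsum : ∑' j : ℕ, f (j + J) ≤ B := by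
    have h1 : Summable (fun j : ℕ => f (j + J)) := (summable_nat_add_iff J).mpr hsum
    have h2 : Summable (fun j : ℕ => C₁ * r * r ^ j) := hgeo.mul_left _
    calc ∑' j : ℕ, f (j + J) ≤ ∑' j : ℕ, C₁ * r * r ^ j := Summable.tsum_le_tsum htail h1 h2
      _ = C₁ * r * (1 - r)⁻¹ := by
          rw [tsum_mul_left, tsum_geometric_of_lt_one hr0.le hr1]
      _ = B := by rw [hBdef]; field_simp
  have hmain : ∑' j : ℕ, f j ≤ (J:ℝ) + B := by
    rw [← hsplit]; exact add_le_add hhead htailsum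
  -- conclude
  have hJle : (J:ℝ) ≤ (n:ℝ) ^ ((1:ℝ) / (2 * m + d)) + 1 := by
    rw [hJ]
    exact (Nat.ceil_lt_add_one
      (show (0:ℝ) ≤ (n:ℝ) ^ ((1:ℝ) / (2 * m + d)) by positivity)).le
  have hmono : (n:ℝ) ^ ((1:ℝ) / (2 * m + d)) ≤ (n:ℝ) ^ ((d:ℝ) / (2 * m + d)) := by
    apply Real.rpow_le_rpow_of_exponent_le hn1
    have : (1:ℝ) ≤ (d:ℝ) := by exact_mod_cast hd
    gcongr
  have hone : (1:ℝ) ≤ (n:ℝ) ^ ((d:ℝ) / (2 * m + d)) :=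
    Real.one_le_rpow hn1 (by positivity)
  calc ∑' j : ℕ, f j ≤ (J:ℝ) + B := hmain
    _ ≤ ((n:ℝ) ^ ((d:ℝ) / (2 * m + d)) + (n:ℝ) ^ ((d:ℝ) / (2 * m + d)))
        + B * (n:ℝ) ^ ((d:ℝ) / (2 * m + d)) := by
        have := mul_le_mul_of_nonneg_left hone hB0.le
        nlinarith [hJle.trans (add_le_add hmono hone)]
    _ = (2 + B) * (n:ℝ) ^ ((d:ℝ) / (2 * m + d)) := by ring
end

section
/- Fix constants C > 0 and m > 0. For λ ∈ (0,1) satisfying λ < exp(-m) and λ (log(1/λ))^m ≤ C^m exp(-C), the function h(w) = exp(C(1 + ‖w‖²))/(1 + ‖w‖²)^m over the region Ω = {w ∈ ℝ^d : λ exp(C(1 + ‖w‖²)) < 1} satisfies λ exp(C(1 + ‖w‖²)) ≤ C^m (log(1/λ))^{-m} (1 + ‖w‖²)^m for all w ∈ Ω. -/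
open Real

/-- Key monotonicity fact for `f(x) = x - m log x` on `[C, L]`. -/
lemma key_f (m C s L : ℝ) (hm : 0 < m) (hC : 0 < C) (hCs : C ≤ s) (hsL : s ≤ L)
    (hCL : C - m * Real.log C ≤ L - m * Real.log L) :
    s - m * Real.log s ≤ L - m * Real.log L := by
  have hs : 0 < s := lt_of_lt_of_le hC hCs
  have hL : 0 < L := lt_of_lt_of_le hs hsL
  rcases le_or_gt m s with h | h
  · -- f increasing past m
    have hx : Real.log s ≤ Real.log L := Real.log_le_log hs hsL
    have hlog : Real.log L - Real.log s ≤ (L - s) / s := by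
      rw [← Real.log_div (ne_of_gt hL) (ne_of_gt hs)]
      have h1 := Real.log_le_sub_one_of_pos (div_pos hL hs)
      have h2 : L / s - 1 = (L - s) / s := by field_simp
      linarith
    have hlog' : (Real.log L - Real.log s) * s ≤ L - s := (le_div_iff₀ hs).mp hlog
    have h2 : (s - m) * (Real.log L - Real.log s) ≥ 0 :=
      mul_nonneg (by linarith) (by linarith)
    nlinarith
  · -- s < m : compare with value at C, then use hCL
    have hx : Real.log C ≤ Real.log s := Real.log_le_log hC hCs
    have hlog : Real.log C - Real.log s ≤ (C - s) / s := by
      rw [← Real.log_div (ne_of_gt hC) (ne_of_gt hs)]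
      have h1 := Real.log_le_sub_one_of_pos (div_pos hC hs)
      have h2 : C / s - 1 = (C - s) / s := by field_simp
      linarith
    have hlog' : (Real.log C - Real.log s) * s ≤ C - s := (le_div_iff₀ hs).mp hlog
    have h2 : (m - s) * (Real.log C - Real.log s) ≤ 0 :=
      mul_nonpos_of_nonneg_of_nonpos (by linarith) (by linarith)
    nlinarith

/-- On the low-frequency region `Ω = {w : λ exp(C(1+‖w‖²)) < 1}`, given `λ < exp(-m)` and
`λ (log(1/λ))^m ≤ C^m exp(-C)`, the regularized multiplier is dominated by the
logarithmic power of `λ` times the Sobolev weight. -/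
theorem low_frequency_multiplier_bound
    (C m : ℝ) (hC : 0 < C) (hm : 0 < m) (d : ℕ)
    (lam : ℝ) (hlam : lam ∈ Set.Ioo (0 : ℝ) 1)
    (hlam1 : lam < Real.exp (-m))
    (hlam2 : lam * (Real.log (1 / lam)) ^ m ≤ C ^ m * Real.exp (-C)) :
    ∀ w : EuclideanSpace ℝ (Fin d),
      lam * Real.exp (C * (1 + ‖w‖ ^ 2)) < 1 →
      lam * Real.exp (C * (1 + ‖w‖ ^ 2))
        ≤ C ^ m * (Real.log (1 / lam)) ^ (-m) * (1 + ‖w‖ ^ 2) ^ m := by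
  intro w hw
  obtain ⟨hlam0, hlam_lt1⟩ := hlam
  set t : ℝ := 1 + ‖w‖ ^ 2 with ht
  have ht1 : (1 : ℝ) ≤ t := by nlinarith [sq_nonneg ‖w‖]
  have htpos : 0 < t := lt_of_lt_of_le one_pos ht1
  set s : ℝ := C * t with hsdef
  set L : ℝ := Real.log (1 / lam) with hLdef
  have hL : 0 < L := Real.log_pos ((one_lt_div hlam0).mpr hlam_lt1)
  have hCs : C ≤ s := by nlinarith
  have hs : 0 < s := lt_of_lt_of_le hC hCs
  have hloglam : Real.log lam = -L := by
    rw [hLdef, one_div, Real.log_inv]; ring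
  have hsL : s ≤ L := by
    have hexp : Real.exp s < 1 / lam := by
      rw [lt_div_iff₀ hlam0]; linarith [hw, mul_comm lam (Real.exp s)]
    have := Real.log_lt_log (Real.exp_pos s) hexp
    rw [Real.log_exp] at this
    exact this.le
  have hCL : C - m * Real.log C ≤ L - m * Real.log L := by
    have h1 : 0 < lam * L ^ m := mul_pos hlam0 (Real.rpow_pos_of_pos hL m)
    have h2 := Real.log_le_log h1 hlam2
    rw [Real.log_mul (ne_of_gt hlam0) (ne_of_gt (Real.rpow_pos_of_pos hL m)),
      Real.log_mul (ne_of_gt (Real.rpow_pos_of_pos hC m)) (Real.exp_ne_zero _),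
      Real.log_rpow hL, Real.log_rpow hC, Real.log_exp, hloglam] at h2
    linarith
  have hkey := key_f m C s L hm hC hCs hsL hCL
  have hlogs : Real.log s = Real.log C + Real.log t :=
    Real.log_mul (ne_of_gt hC) (ne_of_gt htpos)
  have hLHSpos : 0 < lam * Real.exp s := mul_pos hlam0 (Real.exp_pos s)
  have hRHSpos : 0 < C ^ m * L ^ (-m) * t ^ m :=
    mul_pos (mul_pos (Real.rpow_pos_of_pos hC m) (Real.rpow_pos_of_pos hL (-m)))
      (Real.rpow_pos_of_pos htpos m)
  rw [← Real.exp_log hLHSpos, ← Real.exp_log hRHSpos, Real.exp_le_exp,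
    Real.log_mul (ne_of_gt hlam0) (Real.exp_ne_zero _), Real.log_exp,
    Real.log_mul (ne_of_gt (mul_pos (Real.rpow_pos_of_pos hC m) (Real.rpow_pos_of_pos hL (-m))))
      (ne_of_gt (Real.rpow_pos_of_pos htpos m)),
    Real.log_mul (ne_of_gt (Real.rpow_pos_of_pos hC m)) (ne_of_gt (Real.rpow_pos_of_pos hL (-m))),
    Real.log_rpow hC, Real.log_rpow hL, Real.log_rpow htpos, hloglam]
  rw [hlogs, mul_add] at hkey
  linarith
end
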